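/- There exist tokenizations H, H' : List (List ℕ) with H.flatten = H'.flatten and H ≠ H' such that no index of H is an SIT. That is, tokenization inconsistency can occur with an absence of SITs (this requires some token to be the empty list, e.g. a special token that detokenizes to a length-0 string). -/
import Mathlib

/-- The interval of the `i`-th token of a tokenization `H`. -/
def itv (H : List (List ℕ)) (i : ℕ) : ℕ × ℕ :=
  (((H.take i).map List.length).sum,
   ((H.take i).map List.length).sum + (H.getD i []).length)

/-- Tokenization inconsistency can occur with an absence of SITs: there exist
tokenizations `H ≠ H'` with equal flattenings where no index of `H` is an SIT. -/
theorem ti_without_sit :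
    ∃ H H' : List (List ℕ),
      H.flatten = H'.flatten ∧ H ≠ H' ∧
      ∀ i, i < H.length → ∃ j, j < H'.length ∧ itv H i = itv H' j := by
  refine ⟨[[0]], [[], [0]], rfl, by decide, ?_⟩
  intro i hi
  have : i = 0 := by simpa using hi
  subst this
  exact ⟨1, by decide, rfl⟩
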